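/- Let k, w, ℓ ∈ ℕ and let G be a graph. If dcw_k(G) ≤ w and |V(G)| ≥ ℓ·(2w+1) + 2w, then G has a (2k,k)-cutwidth-edge-protrusion X with |X| ≥ ℓ. -/

import Mathlib

/-!
Delete an optimal set `F` of at most `w` edges and take an optimal ordering of `G - F`, of width
at most `k`. Cut the first `ℓ(2w+1)` positions of this ordering into `2w+1` blocks of `ℓ`
consecutive vertices; the at most `2w` endpoints of edges of `F` miss one block `X`. No edge of `F`
touches `X`, so an edge of `G` leaving `X` crosses one of the two cuts of `G - F` that bound the
block, whence `δ(X) ≤ 2k`; and `G[X]` is a subgraph of `G - F`, so the restricted ordering has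
width at most `k`.
-/

/-- A finite undirected multigraph without loops. -/
structure Multigraph where
  V : Type
  E : Type
  finV : Finite V
  finE : Finite E
  ends : E → V × V
  loopless : ∀ e, (ends e).1 ≠ (ends e).2

attribute [instance] Multigraph.finV Multigraph.finE

namespace Multigraph

/-- `δ_G(S)`: the number of edges of `G` with exactly one endpoint in `S`. -/
noncomputable def delta (G : Multigraph) (S : Set G.V) : ℕ :=
  {e : G.E | ¬ ((G.ends e).1 ∈ S ↔ (G.ends e).2 ∈ S)}.ncard

/-- The width `cw_σ(G)` of an ordering, represented as an injective ranking `ρ : V → ℕ`. -/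
noncomputable def cwOrd (G : Multigraph) (ρ : G.V → ℕ) : ℕ :=
  sSup {w | ∃ v : G.V, w = G.delta {u | ρ u ≤ ρ v}}

/-- The cutwidth of a multigraph. -/
noncomputable def cutwidth (G : Multigraph) : ℕ :=
  sInf {w | ∃ ρ : G.V → ℕ, Function.Injective ρ ∧ G.cwOrd ρ = w}

/-- Walks in a multigraph. -/
inductive Walk (G : Multigraph) : G.V → G.V → Type
  | nil (v : G.V) : Walk G v v
  | cons {u v w : G.V} (e : G.E)
      (h : G.ends e = (u, v) ∨ G.ends e = (v, u)) (p : Walk G v w) : Walk G u w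

namespace Walk

def edges {G : Multigraph} : ∀ {u v : G.V}, G.Walk u v → List G.E
  | _, _, .nil _ => []
  | _, _, .cons e _ p => e :: p.edges

def support {G : Multigraph} : ∀ {u v : G.V}, G.Walk u v → List G.V
  | _, _, .nil v => [v]
  | u, _, .cons _ _ p => u :: p.support

end Walk

def Connected (G : Multigraph) : Prop := ∀ u v : G.V, Nonempty (G.Walk u v)

/-- An immersion model of `H` in `G`. -/
structure ImmersionModel (H G : Multigraph) where
  vmap : H.V → G.V
  inj : Function.Injective vmap
  emap : (e : H.E) → G.Walk (vmap (H.ends e).1) (vmap (H.ends e).2)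
  isPath : ∀ e, ((emap e).support).Nodup
  edgeDisj : ∀ e e', e ≠ e' → ∀ f, f ∈ (emap e).edges → f ∉ (emap e').edges

/-- `H ≤_i G`. -/
def Immersion (H G : Multigraph) : Prop := Nonempty (ImmersionModel H G)

/-- A strong immersion model: no internal vertex of a path is a branch vertex. -/
structure StrongImmersionModel (H G : Multigraph) extends ImmersionModel H G where
  strong : ∀ e, ∀ x, x ∈ (emap e).support →
    x ≠ vmap (H.ends e).1 → x ≠ vmap (H.ends e).2 → x ∉ Set.range vmap

/-- `H ≤_si G`. -/
def StrongImmersion (H G : Multigraph) : Prop := Nonempty (StrongImmersionModel H G)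

/-- Isomorphism of multigraphs. -/
structure Iso (G H : Multigraph) where
  fv : G.V ≃ H.V
  fe : G.E ≃ H.E
  pres : ∀ e, H.ends (fe e) = (fv (G.ends e).1, fv (G.ends e).2)
           ∨ H.ends (fe e) = (fv (G.ends e).2, fv (G.ends e).1)

def Isomorphic (G H : Multigraph) : Prop := Nonempty (Iso G H)

/-- The minimal obstruction set of a class `C` with respect to a partial order `le`. -/
def obstructions (le : Multigraph → Multigraph → Prop) (C : Set Multigraph) :
    Set Multigraph :=
  {G | G ∉ C ∧ ∀ G', le G' G → ¬ G'.Isomorphic G → G' ∈ C}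

/-- `C_k`: the class of multigraphs of cutwidth at most `k`. -/
def cutwidthClass (k : ℕ) : Set Multigraph := {G | G.cutwidth ≤ k}

/-- The degree of a vertex (each parallel edge counts once at each endpoint). -/
noncomputable def degree (G : Multigraph) (v : G.V) : ℕ :=
  {e : G.E | (G.ends e).1 = v ∨ (G.ends e).2 = v}.ncard

/-- The number of `A`-blocks of an ordering `ρ`: the number of maximal runs of
consecutive (in `ρ`) vertices belonging to `A`, counted via block-starting vertices. -/
noncomputable def blockCount (G : Multigraph) (ρ : G.V → ℕ) (A : Set G.V) : ℕ :=
  {v : G.V | v ∈ A ∧ ∀ u : G.V, ρ u < ρ v →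
      ∃ w : G.V, w ∉ A ∧ ρ u ≤ ρ w ∧ ρ w < ρ v}.ncard

/-- The extension `G*` of a `k`-boundaried graph `(G, x)`. -/
def extension (G : Multigraph) {k : ℕ} (x : Fin k → G.V) : Multigraph where
  V := G.V ⊕ Fin k
  E := G.E ⊕ Fin k
  finV := inferInstance
  finE := inferInstance
  ends := Sum.elim (fun e => (Sum.inl (G.ends e).1, Sum.inl (G.ends e).2))
                   (fun i => (Sum.inl (x i), Sum.inr i))
  loopless := by
    rintro (e | i)
    · simpa using G.loopless e
    · simp

/-- The join `𝐀 ⊕ 𝐁` of two `k`-boundaried graphs. -/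
def join {k : ℕ} (A B : Multigraph) (x : Fin k → A.V) (y : Fin k → B.V) : Multigraph where
  V := A.V ⊕ B.V
  E := (A.E ⊕ B.E) ⊕ Fin k
  finV := inferInstance
  finE := inferInstance
  ends := Sum.elim
    (Sum.elim (fun e => (Sum.inl (A.ends e).1, Sum.inl (A.ends e).2))
              (fun e => (Sum.inr (B.ends e).1, Sum.inr (B.ends e).2)))
    (fun i => (Sum.inl (x i), Sum.inr (y i)))
  loopless := by
    rintro ((e | e) | i)
    · simpa using A.loopless e
    · simpa using B.loopless e
    · simp

/-- An `ℓ`-bucketing of an ordering `ρ` (buckets indexed 1,…,ℓ). -/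
def IsBucketing (G : Multigraph) (ρ : G.V → ℕ) (ℓ : ℕ) (T : G.V → ℕ) : Prop :=
  (∀ v, 1 ≤ T v ∧ T v ≤ ℓ) ∧ ∀ u v : G.V, ρ u ≤ ρ v → T u ≤ T v

/-- `width(G,σ,T,i)`: the maximum size of a cut in `cuts(G,σ,T,i)`; these cuts
are described by their left side `S`, which contains all buckets before `i`,
a `σ`-downward-closed part of bucket `i`, and nothing else. -/
noncomputable def bucketWidth (G : Multigraph) (ρ : G.V → ℕ) (T : G.V → ℕ) (i : ℕ) : ℕ :=
  sSup {w | ∃ S : Set G.V,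
    (∀ v, T v < i → v ∈ S) ∧ (∀ v ∈ S, T v ≤ i) ∧
    (∀ u v : G.V, T u = i → T v = i → ρ u ≤ ρ v → v ∈ S → u ∈ S) ∧
    w = G.delta S}

/-- A `(k,ℓ)`-bucket interface. -/
structure BucketInterface (k ℓ : ℕ) where
  b : Fin k → ℕ
  b' : Fin k → ℕ
  mu : ℕ → ℕ
  mu' : ℕ → ℕ
  b_mem : ∀ i, b i ∈ Set.Icc 1 ℓ
  b'_mem : ∀ i, b' i ∈ Set.Icc 1 ℓ
  mu_le : ∀ j, mu j ≤ k
  mu'_le : ∀ j, mu' j ≤ k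

/-- A `k`-boundaried graph `(G, x)` conforms with a `(k,ℓ)`-bucket interface. -/
def Conforms {k : ℕ} (G : Multigraph) (x : Fin k → G.V) (ℓ : ℕ)
    (I : BucketInterface k ℓ) : Prop :=
  ∃ ρ : (G.extension x).V → ℕ, Function.Injective ρ ∧
  ∃ T : (G.extension x).V → ℕ, (G.extension x).IsBucketing ρ ℓ T ∧
    (∀ v : G.V, Odd (T (Sum.inl v))) ∧
    (∀ i : Fin k, Even (T (Sum.inr i))) ∧
    (∀ i : Fin k, T (Sum.inl (x i)) = I.b i) ∧
    (∀ i : Fin k, T (Sum.inr i) = I.b' i) ∧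
    (∀ j ∈ Set.Icc 1 ℓ,
      G.bucketWidth (fun v => ρ (Sum.inl v)) (fun v => T (Sum.inl v)) j ≤ I.mu j) ∧
    (∀ j ∈ Set.Icc 1 ℓ, (G.extension x).bucketWidth ρ T j ≤ I.mu' j)

/-- `m` pairwise edge-disjoint paths between the sets `X` and `Y`. -/
def ConnectorBetween (G : Multigraph) (X Y : Set G.V) (m : ℕ) : Prop :=
  ∃ (s t : Fin m → G.V) (P : (i : Fin m) → G.Walk (s i) (t i)),
    (∀ i, s i ∈ X) ∧ (∀ i, t i ∈ Y) ∧ (∀ i, (P i).support.Nodup) ∧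
    ∀ i j, i ≠ j → ∀ f, f ∈ (P i).edges → f ∉ (P j).edges

/-- A linked ordering. -/
def Linked (G : Multigraph) (ρ : G.V → ℕ) : Prop :=
  ∀ u u' : G.V, ρ u ≤ ρ u' →
    G.ConnectorBetween {z | ρ z ≤ ρ u} {z | ¬ ρ z ≤ ρ u'}
      (sInf {w | ∃ v : G.V, ρ u ≤ ρ v ∧ ρ v ≤ ρ u' ∧ w = G.delta {z | ρ z ≤ ρ v}})

/-- The multigraph obtained by deleting a set of edges. -/
def deleteEdges (G : Multigraph) (F : Set G.E) : Multigraph where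
  V := G.V
  E := {e : G.E // e ∉ F}
  finV := G.finV
  finE := inferInstance
  ends e := G.ends e.1
  loopless e := G.loopless e.1

/-- `dcw_k(G)`: minimum number of edges to delete to reach cutwidth at most `k`. -/
noncomputable def dcw (k : ℕ) (G : Multigraph) : ℕ :=
  sInf {w | ∃ F : Set G.E, (G.deleteEdges F).cutwidth ≤ k ∧ F.ncard = w}

/-- The class `C_{w,k}`. -/
def dcwClass (w k : ℕ) : Set Multigraph := {G | dcw k G ≤ w}

/-- Induced subgraph `G[X]`. -/
def induce (G : Multigraph) (X : Set G.V) : Multigraph where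
  V := X
  E := {e : G.E // (G.ends e).1 ∈ X ∧ (G.ends e).2 ∈ X}
  finV := inferInstance
  finE := inferInstance
  ends e := (⟨(G.ends e.1).1, e.2.1⟩, ⟨(G.ends e.1).2, e.2.2⟩)
  loopless := by
    intro e h
    exact G.loopless e.1 (Subtype.ext_iff.mp h)

/-- A graph is `ℋ`-immersion-free if it contains no member of `ℋ` as an immersion. -/
def ImmersionFree (H : Set Multigraph) (G : Multigraph) : Prop :=
  ∀ X ∈ H, ¬ Immersion X G

/-- `aic_ℋ(G)`: minimum number of edge deletions to reach an `ℋ`-immersion-free graph. -/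
noncomputable def aic (H : Set Multigraph) (G : Multigraph) : ℕ :=
  sInf {w | ∃ F : Set G.E, ImmersionFree H (G.deleteEdges F) ∧ F.ncard = w}

/-- The class `C_{w,ℋ}`. -/
def aicClass (w : ℕ) (H : Set Multigraph) : Set Multigraph := {G | aic H G ≤ w}

/-- `ℋ` is a `≤_i`-antichain. -/
def IsAntichainImm (H : Set Multigraph) : Prop :=
  ∀ G₁ ∈ H, ∀ G₂ ∈ H, Immersion G₁ G₂ → Isomorphic G₁ G₂

/-- Disjoint union of two multigraphs. -/
def disjUnion (G H : Multigraph) : Multigraph where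
  V := G.V ⊕ H.V
  E := G.E ⊕ H.E
  finV := inferInstance
  finE := inferInstance
  ends := Sum.elim (fun e => (Sum.inl (G.ends e).1, Sum.inl (G.ends e).2))
                   (fun e => (Sum.inr (H.ends e).1, Sum.inr (H.ends e).2))
  loopless := by
    rintro (e | e)
    · simpa using G.loopless e
    · simpa using H.loopless e

/-- Disjoint union of a finite family of multigraphs. -/
def sigmaUnion {m : ℕ} (Gs : Fin m → Multigraph) : Multigraph where
  V := Σ i, (Gs i).V
  E := Σ i, (Gs i).E
  finV := inferInstance
  finE := inferInstance
  ends e := (⟨e.1, ((Gs e.1).ends e.2).1⟩, ⟨e.1, ((Gs e.1).ends e.2).2⟩)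
  loopless := by
    intro e h
    exact (Gs e.1).loopless e.2 (by simpa using h)

/-- `cw_σ(G,X) = δ_G(X) + cw_{σ_X}(G[X])`. -/
noncomputable def cwRel (G : Multigraph) (ρ : G.V → ℕ) (X : Set G.V) : ℕ :=
  G.delta X + (G.induce X).cwOrd (fun v => ρ v.val)

/-- Membership in the family of prefixes relevant to `X`-linkedness: the complement
of `X` (the prefix right before `X` starts) and the prefixes ending inside `X`. -/
def IsXPrefix (G : Multigraph) (ρ : G.V → ℕ) (X : Set G.V) (P : Set G.V) : Prop :=
  P = Xᶜ ∨ ∃ v ∈ X, P = {z | ρ z ≤ ρ v}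

/-- An `X`-linked ordering. -/
def XLinked (G : Multigraph) (ρ : G.V → ℕ) (X : Set G.V) : Prop :=
  (∀ u v : G.V, u ∉ X → v ∈ X → ρ u < ρ v) ∧
  ∀ P P' : Set G.V, G.IsXPrefix ρ X P → G.IsXPrefix ρ X P' → P ⊆ P' →
    G.ConnectorBetween P P'ᶜ
      (sInf {w | ∃ Q : Set G.V, G.IsXPrefix ρ X Q ∧ P ⊆ Q ∧ Q ⊆ P' ∧ w = G.delta Q})

end Multigraph

theorem Finite.exists_ranking {V : Type*} [Finite V] {ρ : V → ℕ}
    (hρ : Function.Injective ρ) :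
    ∃ r : V → ℕ, Function.Injective r ∧ Set.range r = Set.Iio (Nat.card V) ∧
      ∀ u v, r u ≤ r v ↔ ρ u ≤ ρ v := by
  cases nonempty_fintype V
  let _ : LinearOrder V := LinearOrder.lift' ρ hρ
  let e : V ≃o Fin (Nat.card V) :=
    (Fintype.orderIsoFinOfCardEq V Nat.card_eq_fintype_card.symm).symm
  refine ⟨fun v => e v, Fin.val_injective.comp e.injective, ?_, fun u v => ?_⟩
  · rw [Set.range_comp', e.range_eq, Set.image_univ, Fin.range_val]
  · exact Fin.val_fin_le.trans e.le_iff_le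

theorem le_ncard_setOf_div_eq {V : Type*} [Finite V] {r : V → ℕ} {n ℓ j : ℕ}
    (hr : Function.Injective r) (hrange : Set.range r = Set.Iio n) (hj : (j + 1) * ℓ ≤ n) :
    ℓ ≤ {v | r v / ℓ = j}.ncard := by
  rcases Nat.eq_zero_or_pos ℓ with rfl | hℓ
  · exact Nat.zero_le _
  have hblock : Set.Ico (j * ℓ) (j * ℓ + ℓ) ⊆ Set.range r := by
    rw [hrange]
    exact fun x hx => lt_of_lt_of_le hx.2 (by linarith)
  calc ℓ = (Set.Ico (j * ℓ) (j * ℓ + ℓ)).ncard := by simp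
    _ = (r ⁻¹' Set.Ico (j * ℓ) (j * ℓ + ℓ)).ncard :=
      (Set.ncard_preimage_of_injective_subset_range hr hblock).symm
    _ ≤ {v | r v / ℓ = j}.ncard := by
      refine Set.ncard_le_ncard (fun v hv => Nat.div_eq_of_lt_le hv.1 ?_) ?_
      · exact lt_of_lt_of_le hv.2 (by linarith)
      · exact Set.toFinite _

namespace Multigraph

variable {G : Multigraph}

@[simp]
theorem delta_empty : G.delta ∅ = 0 := by
  simp [delta]

theorem delta_le_card_edges (S : Set G.V) : G.delta S ≤ Nat.card G.E :=
  Set.ncard_le_card _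

theorem delta_sdiff_le (A B : Set G.V) : G.delta (A \ B) ≤ G.delta A + G.delta B := by
  refine (Set.ncard_le_ncard (fun e he => ?_)).trans (Set.ncard_union_le _ _)
  simp only [Set.mem_ofPred_eq, Set.mem_sdiff, Set.mem_union] at he ⊢
  tauto

theorem delta_comap_le {H : Multigraph} (f : H.V → G.V) (g : H.E → G.E)
    (hg : Function.Injective g)
    (hends : ∀ e, G.ends (g e) = (f (H.ends e).1, f (H.ends e).2)) (S : Set G.V) :
    H.delta (f ⁻¹' S) ≤ G.delta S :=
  Set.ncard_le_ncard_of_injOn g (fun e he => by simpa [hends] using he) hg.injOn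

theorem delta_deleteEdges {F : Set G.E} {X : Set G.V}
    (hF : ∀ e ∈ F, ((G.ends e).1 ∈ X ↔ (G.ends e).2 ∈ X)) :
    (G.deleteEdges F).delta X = G.delta X := by
  unfold delta
  refine (Set.ncard_subtype (· ∉ F)
    {e | ¬ ((G.ends e).1 ∈ X ↔ (G.ends e).2 ∈ X)}).trans ?_
  exact congrArg Set.ncard (Set.inter_eq_left.mpr fun e he heF => he (hF e heF))

theorem delta_le_cwOrd (ρ : G.V → ℕ) {S : Set G.V}
    (hS : ∀ u v, ρ u ≤ ρ v → v ∈ S → u ∈ S) : G.delta S ≤ G.cwOrd ρ := by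
  rcases S.eq_empty_or_nonempty with rfl | hne
  · simp
  obtain ⟨b, hb, hmax⟩ := S.exists_max_image ρ S.toFinite hne
  have hSb : S = {u | ρ u ≤ ρ b} := Set.ext fun u => ⟨hmax u, fun hu => hS u b hu hb⟩
  refine le_csSup ⟨Nat.card G.E, ?_⟩ ⟨b, congrArg G.delta hSb⟩
  rintro _ ⟨v, rfl⟩
  exact delta_le_card_edges _

theorem cwOrd_le {ρ : G.V → ℕ} {k : ℕ} (h : ∀ v, G.delta {u | ρ u ≤ ρ v} ≤ k) :
    G.cwOrd ρ ≤ k :=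
  csSup_le' (by rintro _ ⟨v, rfl⟩; exact h v)

theorem cwOrd_congr {ρ ρ' : G.V → ℕ} (h : ∀ u v, ρ' u ≤ ρ' v ↔ ρ u ≤ ρ v) :
    G.cwOrd ρ' = G.cwOrd ρ := by
  simp only [cwOrd, h]

theorem cutwidth_le_cwOrd {ρ : G.V → ℕ} (hρ : Function.Injective ρ) :
    G.cutwidth ≤ G.cwOrd ρ :=
  Nat.sInf_le ⟨ρ, hρ, rfl⟩

theorem exists_ranking_cwOrd_eq_cutwidth :
    ∃ r : G.V → ℕ, Function.Injective r ∧ Set.range r = Set.Iio (Nat.card G.V) ∧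
      G.cwOrd r = G.cutwidth := by
  obtain ⟨n, ⟨e⟩⟩ := Finite.exists_equiv_fin G.V
  obtain ⟨ρ, hρ, hρw⟩ :=
    Nat.sInf_mem (s := {w | ∃ ρ : G.V → ℕ, Function.Injective ρ ∧ G.cwOrd ρ = w})
      ⟨_, _, Fin.val_injective.comp e.injective, rfl⟩
  obtain ⟨r, hr, hrange, hrρ⟩ := Finite.exists_ranking hρ
  exact ⟨r, hr, hrange, (cwOrd_congr hrρ).trans hρw⟩

theorem exists_deleteEdges_cutwidth_le (k : ℕ) :
    ∃ F : Set G.E, (G.deleteEdges F).cutwidth ≤ k ∧ F.ncard = G.dcw k := by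
  refine Nat.sInf_mem (s := {w | ∃ F : Set G.E, (G.deleteEdges F).cutwidth ≤ k ∧ F.ncard = w})
    ⟨_, Set.univ, ?_, rfl⟩
  obtain ⟨r, hr, -, -⟩ := (G.deleteEdges Set.univ).exists_ranking_cwOrd_eq_cutwidth
  have : IsEmpty (G.deleteEdges Set.univ).E := ⟨fun e => e.2 trivial⟩
  refine (cutwidth_le_cwOrd hr).trans ((cwOrd_le (k := 0) fun v => ?_).trans (Nat.zero_le k))
  simpa using delta_le_card_edges (G := G.deleteEdges Set.univ) {u | r u ≤ r v}

theorem cutwidth_induce_le_cwOrd {F : Set G.E} {X : Set G.V}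
    (hF : ∀ e ∈ F, ¬ ((G.ends e).1 ∈ X ∧ (G.ends e).2 ∈ X))
    {ρ : G.V → ℕ} (hρ : Function.Injective ρ) :
    (G.induce X).cutwidth ≤ (G.deleteEdges F).cwOrd ρ := by
  refine (cutwidth_le_cwOrd (hρ.comp Subtype.val_injective)).trans (cwOrd_le fun v => ?_)
  refine (delta_comap_le (G := G.deleteEdges F) Subtype.val
    (fun e : (G.induce X).E => ⟨e.1, fun heF => hF e.1 heF e.2⟩)
    (fun e e' h => Subtype.ext (Subtype.mk.inj h)) (fun _ => rfl) _).trans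
    (delta_le_cwOrd (G := G.deleteEdges F) ρ fun u w huw hw => huw.trans hw)

theorem exists_lt_forall_ends_ne (F : Set G.E) (b : G.V → ℕ) :
    ∃ j < 2 * F.ncard + 1, ∀ e ∈ F, b (G.ends e).1 ≠ j ∧ b (G.ends e).2 ≠ j := by
  let Fs := F.toFinite.toFinset
  have hFs : Fs.card = F.ncard := (Set.ncard_eq_toFinset_card F).symm
  obtain ⟨j, hj, hjJ⟩ := Finset.exists_mem_notMem_of_card_lt_card
    (s := Fs.image (fun e => b (G.ends e).1) ∪ Fs.image (fun e => b (G.ends e).2))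
    (t := Finset.range (2 * F.ncard + 1)) <| by
      rw [Finset.card_range]
      have := (Finset.card_union_le (Fs.image fun e => b (G.ends e).1)
        (Fs.image fun e => b (G.ends e).2)).trans
        (add_le_add Finset.card_image_le Finset.card_image_le)
      omega
  have heFs {e} (he : e ∈ F) : e ∈ Fs := F.toFinite.mem_toFinset.mpr he
  refine ⟨j, Finset.mem_range.mp hj, fun e he => ⟨fun h => hjJ ?_, fun h => hjJ ?_⟩⟩
  · exact h ▸ Finset.mem_union_left _ (Finset.mem_image_of_mem _ (heFs he))
  · exact h ▸ Finset.mem_union_right _ (Finset.mem_image_of_mem _ (heFs he))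

end Multigraph

open Multigraph in
/-- if `dcw_k(G) ≤ w` and `|V(G)| ≥ ℓ(2w+1) + 2w`, then `G` has a
`(2k,k)`-cutwidth-edge-protrusion of at least `ℓ` vertices. -/
theorem exists_cutwidth_edge_protrusion
    (k w ℓ : ℕ) (G : Multigraph)
    (hdcw : dcw k G ≤ w) (hsize : ℓ * (2 * w + 1) + 2 * w ≤ Nat.card G.V) :
    ∃ X : Set G.V, G.delta X ≤ 2 * k ∧ (G.induce X).cutwidth ≤ k ∧ ℓ ≤ X.ncard := by
  obtain ⟨F, hFcw, hFcard⟩ := G.exists_deleteEdges_cutwidth_le k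
  obtain ⟨r, hr, hrange, hrw⟩ := (G.deleteEdges F).exists_ranking_cwOrd_eq_cutwidth
  have hwidth : (G.deleteEdges F).cwOrd r ≤ k := hrw.trans_le hFcw
  obtain ⟨j, hj, hclean⟩ := G.exists_lt_forall_ends_ne F (fun v => r v / ℓ)
  have hprefix : ∀ m, (G.deleteEdges F).delta {v | r v / ℓ < m} ≤ k := fun m =>
    (delta_le_cwOrd r fun u v huv hv => (Nat.div_le_div_right huv).trans_lt hv).trans hwidth
  refine ⟨{v | r v / ℓ = j}, ?_, ?_, le_ncard_setOf_div_eq hr hrange ?_⟩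
  · rw [← delta_deleteEdges fun e he => iff_of_false (hclean e he).1 (hclean e he).2, two_mul]
    calc (G.deleteEdges F).delta {v | r v / ℓ = j}
        = (G.deleteEdges F).delta ({v | r v / ℓ < j + 1} \ {v | r v / ℓ < j}) := by
          congr 1; ext v; simp only [Set.mem_ofPred_eq, Set.mem_sdiff]; omega
      _ ≤ k + k := (delta_sdiff_le _ _).trans (add_le_add (hprefix _) (hprefix _))
  · exact (cutwidth_induce_le_cwOrd (fun e he h => (hclean e he).1 h.1) hr).trans hwidth
  · calc (j + 1) * ℓ ≤ (2 * w + 1) * ℓ := Nat.mul_le_mul_right ℓ (by omega)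
      _ ≤ Nat.card G.V := by linarith
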